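/- Let C₁, C₂ be linear codes over a finite field F with C₂ ⊆ C₁ ⊆ F^n, dim C₁ = k₁, dim C₂ = k₂. Then the symplectic dual of C = C₂ × C₁^⊥ is C^{⊥*} = C₁ × C₂^⊥, and dim C^{⊥*} − dim C = 2(k₁ − k₂). -/

import Mathlib

/-!
Pairing `w` with the vectors `(a, 0)` and `(0, b)` separates the two halves of the symplectic
form, so the symplectic dual of `p × q` is `q^⊥ × p^⊥`. For `C₂ × C₁^⊥` this gives
`C₁^⊥⊥ × C₂^⊥ = C₁ × C₂^⊥`, and `dim C^⊥ = n - dim C` turns the dimensions into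
`(k₁ + n - k₂) - (k₂ + n - k₁)`.
-/

variable {F : Type*} [Field F] {n : ℕ}

/-- The symplectic form `(u|v) * (u'|v') = v·u' − v'·u` on `F^n × F^n`. -/
def sympForm (w w' : (Fin n → F) × (Fin n → F)) : F :=
  (∑ i, w.2 i * w'.1 i) - ∑ i, w'.2 i * w.1 i

/-- The dual of `C` with respect to the symplectic form. -/
def sympDual (C : Submodule F ((Fin n → F) × (Fin n → F))) :
    Submodule F ((Fin n → F) × (Fin n → F)) where
  carrier := {w | ∀ w' ∈ C, sympForm w w' = 0}
  zero_mem' := by intro w' _; simp [sympForm]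
  add_mem' := by
    intro a b ha hb w' hw'
    have h1 := ha w' hw'
    have h2 := hb w' hw'
    simp only [sympForm] at h1 h2 ⊢
    simp only [Prod.fst_add, Prod.snd_add, Pi.add_apply, add_mul, mul_add,
      Finset.sum_add_distrib]
    linear_combination h1 + h2
  smul_mem' := by
    intro c a ha w' hw'
    have h1 := ha w' hw'
    simp only [sympForm] at h1 ⊢
    simp only [Prod.smul_fst, Prod.smul_snd, Pi.smul_apply, smul_eq_mul,
      mul_assoc, mul_left_comm, ← Finset.mul_sum]
    linear_combination c * h1

/-- The dual of a code with respect to the Euclidean inner product `u·v = Σ uᵢvᵢ`. -/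
def euclDual (C : Submodule F (Fin n → F)) : Submodule F (Fin n → F) where
  carrier := {u | ∀ v ∈ C, ∑ i, u i * v i = 0}
  zero_mem' := by intro v _; simp
  add_mem' := by
    intro a b ha hb v hv
    have h1 := ha v hv
    have h2 := hb v hv
    simp only [Pi.add_apply, add_mul, Finset.sum_add_distrib]
    linear_combination h1 + h2
  smul_mem' := by
    intro c a ha v hv
    have h1 := ha v hv
    simp only [Pi.smul_apply, smul_eq_mul, mul_assoc, ← Finset.mul_sum]
    linear_combination c * h1

theorem Submodule.finrank_prod {K M N : Type*} [DivisionRing K] [AddCommGroup M]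
    [AddCommGroup N] [Module K M] [Module K N] (p : Submodule K M) (q : Submodule K N)
    [FiniteDimensional K p] [FiniteDimensional K q] :
    Module.finrank K (p.prod q) = Module.finrank K p + Module.finrank K q := by
  rw [← p.range_subtype, ← q.range_subtype, ← LinearMap.range_prodMap,
    LinearMap.finrank_range_of_inj
      (Prod.map_injective.2 ⟨p.injective_subtype, q.injective_subtype⟩),
    Module.finrank_prod, p.range_subtype, q.range_subtype]

open Matrix

theorem mem_euclDual {C : Submodule F (Fin n → F)} {u : Fin n → F} :
    u ∈ euclDual C ↔ ∀ v ∈ C, u ⬝ᵥ v = 0 :=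
  Iff.rfl

theorem sympForm_eq_dotProduct (w w' : (Fin n → F) × (Fin n → F)) :
    sympForm w w' = w.2 ⬝ᵥ w'.1 - w'.2 ⬝ᵥ w.1 :=
  rfl

theorem isRefl_dotProductBilin :
    LinearMap.BilinForm.IsRefl (dotProductBilin F F : LinearMap.BilinForm F (Fin n → F)) :=
  fun u v h => by simpa [dotProduct_comm] using h

theorem nondegenerate_dotProductBilin :
    (dotProductBilin F F : LinearMap.BilinForm F (Fin n → F)).Nondegenerate :=
  (LinearMap.IsRefl.nondegenerate_iff_separatingLeft
    (isRefl_dotProductBilin (F := F) (n := n))).2 fun _ hu =>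
    dotProduct_eq_zero _ hu

theorem euclDual_eq_orthogonal (C : Submodule F (Fin n → F)) :
    euclDual C = LinearMap.BilinForm.orthogonal (dotProductBilin F F) C := by
  ext u
  simp [mem_euclDual, LinearMap.BilinForm.mem_orthogonal_iff, dotProduct_comm]

theorem finrank_euclDual (C : Submodule F (Fin n → F)) :
    Module.finrank F (euclDual C) = n - Module.finrank F C := by
  rw [euclDual_eq_orthogonal,
    LinearMap.BilinForm.finrank_orthogonal nondegenerate_dotProductBilin, Module.finrank_fin_fun]

theorem euclDual_euclDual (C : Submodule F (Fin n → F)) : euclDual (euclDual C) = C := by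
  rw [euclDual_eq_orthogonal, euclDual_eq_orthogonal]
  exact LinearMap.BilinForm.orthogonal_orthogonal nondegenerate_dotProductBilin
    isRefl_dotProductBilin C

theorem mem_sympDual {C : Submodule F ((Fin n → F) × (Fin n → F))}
    {w : (Fin n → F) × (Fin n → F)} : w ∈ sympDual C ↔ ∀ w' ∈ C, sympForm w w' = 0 :=
  Iff.rfl

theorem sympDual_prod (p q : Submodule F (Fin n → F)) :
    sympDual (p.prod q) = (euclDual q).prod (euclDual p) := by
  ext w
  rw [mem_sympDual, Submodule.mem_prod, mem_euclDual, mem_euclDual]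
  constructor
  · intro hw
    refine ⟨fun v hv => ?_, fun v hv => ?_⟩
    · simpa [sympForm_eq_dotProduct, dotProduct_comm] using hw (0, v) ⟨p.zero_mem, hv⟩
    · simpa [sympForm_eq_dotProduct] using hw (v, 0) ⟨hv, q.zero_mem⟩
  · rintro ⟨h₁, h₂⟩ ⟨a, b⟩ ⟨ha, hb⟩
    rw [sympForm_eq_dotProduct, dotProduct_comm b, h₂ a ha, h₁ b hb, sub_zero]

theorem css_sympDual_eq_general (C₁ C₂ : Submodule F (Fin n → F))
    (h : C₂ ≤ C₁) (k₁ k₂ : ℕ) (hk₁ : Module.finrank F C₁ = k₁)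
    (hk₂ : Module.finrank F C₂ = k₂) :
    sympDual (C₂.prod (euclDual C₁)) = C₁.prod (euclDual C₂) ∧
      Module.finrank F (sympDual (C₂.prod (euclDual C₁))) -
          Module.finrank F (C₂.prod (euclDual C₁)) = 2 * (k₁ - k₂) := by
  have hdual : sympDual (C₂.prod (euclDual C₁)) = C₁.prod (euclDual C₂) := by
    rw [sympDual_prod, euclDual_euclDual]
  refine ⟨hdual, ?_⟩
  have hk : k₂ ≤ k₁ := hk₁ ▸ hk₂ ▸ Submodule.finrank_mono h
  have hn : k₁ ≤ n := hk₁ ▸ (Submodule.finrank_le C₁).trans_eq (Module.finrank_fin_fun F)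
  rw [hdual, Submodule.finrank_prod, Submodule.finrank_prod, finrank_euclDual,
    finrank_euclDual, hk₁, hk₂]
  omega

/-- The symplectic dual of `C = C₂ × C₁^⊥` is `C₁ × C₂^⊥`, and
`dim C^{⊥*} − dim C = 2(k₁ − k₂)`. -/
theorem css_sympDual_eq [Fintype F] (C₁ C₂ : Submodule F (Fin n → F))
    (h : C₂ ≤ C₁) (k₁ k₂ : ℕ) (hk₁ : Module.finrank F C₁ = k₁)
    (hk₂ : Module.finrank F C₂ = k₂) :
    sympDual (C₂.prod (euclDual C₁)) = C₁.prod (euclDual C₂) ∧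
      Module.finrank F (sympDual (C₂.prod (euclDual C₁))) -
          Module.finrank F (C₂.prod (euclDual C₁)) = 2 * (k₁ - k₂) :=
  css_sympDual_eq_general C₁ C₂ h k₁ k₂ hk₁ hk₂
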